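/- arXiv:2506.18863 — 2 statements merged into one kernel-verified Lean document; each statement's English description precedes it below -/
import Mathlib

section
/- Let y ∈ ℂ^m, x ∈ ℂ^n be random vectors and A ∈ ℂ^{m×n} a random matrix, all with finite second moments, such that y, A, x are mutually independent and the columns a_1,…,a_n of A are mutually independent. Let F ∈ ℂ^{m×m} be a deterministic Hermitian matrix. Then E[(y−Ax)^H F (y−Ax)] = (⟨y⟩−⟨A⟩⟨x⟩)^H F (⟨y⟩−⟨A⟩⟨x⟩) + ⟨x⟩^H B ⟨x⟩ + Tr(F Σ_y) + Tr(Σ_x B) + Tr(Σ_x ⟨A⟩^H F ⟨A⟩), where B = diag(Tr(F Σ_{a_1}),…,Tr(F Σ_{a_n})) and ⟨A⟩ is the matrix whose i-th column is ⟨a_i⟩. -/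
open MeasureTheory Matrix ProbabilityTheory

/-- The (entrywise) mean of a complex random vector. -/
noncomputable def vmean {Ω : Type*} [MeasurableSpace Ω] (μ : Measure Ω) {m : ℕ}
    (v : Ω → Fin m → ℂ) : Fin m → ℂ :=
  fun i => ∫ ω, v ω i ∂μ

/-- The covariance matrix `E[(v - ⟨v⟩)(v - ⟨v⟩)ᴴ]` of a complex random vector. -/
noncomputable def vcov {Ω : Type*} [MeasurableSpace Ω] (μ : Measure Ω) {m : ℕ}
    (v : Ω → Fin m → ℂ) : Matrix (Fin m) (Fin m) ℂ :=
  Matrix.of fun i j => ∫ ω, (v ω i - vmean μ v i) * star (v ω j - vmean μ v j) ∂μ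

/-- Index type for the joint family consisting of `y`, `x`, and the columns of `A`. -/
inductive JIdx (n : ℕ) where
  | y : JIdx n
  | x : JIdx n
  | col (j : Fin n) : JIdx n

/-- Codomain of each member of the joint family. -/
def JType (m n : ℕ) : JIdx n → Type
  | .y => Fin m → ℂ
  | .x => Fin n → ℂ
  | .col _ => Fin m → ℂ

/-- The measurable space structure on each codomain. -/
noncomputable def JMeas (m n : ℕ) : ∀ i : JIdx n, MeasurableSpace (JType m n i)
  | .y => (inferInstance : MeasurableSpace (Fin m → ℂ))
  | .x => (inferInstance : MeasurableSpace (Fin n → ℂ))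
  | .col _ => (inferInstance : MeasurableSpace (Fin m → ℂ))

/-- The joint family `(y, x, a_1, …, a_n)`, where `a_j` is the `j`-th column of `A`.
Mutual independence of this family is equivalent to the requirement that `y`, `A`, `x`
are mutually independent and that the columns of `A` are mutually independent. -/
def JFam {Ω : Type*} {m n : ℕ} (y : Ω → Fin m → ℂ) (A : Ω → Matrix (Fin m) (Fin n) ℂ)
    (x : Ω → Fin n → ℂ) : ∀ i : JIdx n, Ω → JType m n i
  | .y => y
  | .x => x
  | .col j => fun ω k => A ω k j

/-!
With `r = y - A x` one has `E[rᴴ F r] = tr (F E[r rᴴ])`, so everything reduces to the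
second-moment matrix of `r`. Since `y` is independent of `A x`, the cross terms are `⟨y⟩⟨A x⟩ᴴ`
and its adjoint, and `⟨A x⟩ = ⟨A⟩⟨x⟩`. In `E[(A x)(A x)ᴴ] = ∑ₖₗ E[x_k x̄_l] E[a_k a_lᴴ]`,
independence of the columns gives `E[a_k a_lᴴ] = ⟨a_k⟩⟨a_l⟩ᴴ` for `k ≠ l`, while `k = l`
contributes the extra `Σ_{a_k}`; hence `E[(A x)(A x)ᴴ] = ∑ₖ E|x_k|² Σ_{a_k} + ⟨A⟩ E[x xᴴ] ⟨A⟩ᴴ`.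
Taking the trace against `F` and writing `E[v vᴴ] = Σ_v + ⟨v⟩⟨v⟩ᴴ` gives the five terms.
-/

section Moments

variable {Ω : Type*} [MeasurableSpace Ω] {μ : Measure Ω} {p q : ℕ}

noncomputable def crossMoment (μ : Measure Ω) (u : Ω → Fin p → ℂ) (w : Ω → Fin q → ℂ) :
    Matrix (Fin p) (Fin q) ℂ :=
  Matrix.of fun i j => ∫ ω, u ω i * star (w ω j) ∂μ

lemma integrable_mul_star {f g : Ω → ℂ} (hf : MemLp f 2 μ) (hg : MemLp g 2 μ) :
    Integrable (fun ω => f ω * star (g ω)) μ :=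
  hf.integrable_mul hg.star

lemma aemeasurable_of_forall_memLp {v : Ω → Fin p → ℂ} (hv : ∀ i, MemLp (fun ω => v ω i) 2 μ) :
    AEMeasurable v μ :=
  aemeasurable_pi_lambda v fun i => (hv i).aestronglyMeasurable.aemeasurable

lemma ProbabilityTheory.IndepFun.memLp_two_mul {f g : Ω → ℂ} (h : IndepFun f g μ)
    (hf : MemLp f 2 μ) (hg : MemLp g 2 μ) : MemLp (fun ω => f ω * g ω) 2 μ := by
  have hfg : AEStronglyMeasurable (fun ω => f ω * g ω) μ := hf.1.mul hg.1
  rw [memLp_two_iff_integrable_sq_norm hfg]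
  have hsq : Measurable fun z : ℂ => ‖z‖ ^ 2 := by fun_prop
  simp_rw [norm_mul, mul_pow]
  exact (h.comp hsq hsq).integrable_mul
    ((memLp_two_iff_integrable_sq_norm hf.1).1 hf) ((memLp_two_iff_integrable_sq_norm hg.1).1 hg)

lemma crossMoment_self [IsProbabilityMeasure μ] {v : Ω → Fin p → ℂ}
    (hv : ∀ i, MemLp (fun ω => v ω i) 2 μ) :
    crossMoment μ v v = vcov μ v + vecMulVec (vmean μ v) (star (vmean μ v)) := by
  ext i j
  set c := vmean μ v
  have hcentered : Integrable (fun ω => (v ω i - c i) * star (v ω j - c j)) μ :=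
    integrable_mul_star ((hv i).sub (memLp_const (c i))) ((hv j).sub (memLp_const (c j)))
  have hi : Integrable (fun ω => v ω i) μ := (hv i).integrable one_le_two
  have hj : Integrable (fun ω => star (v ω j)) μ := (hv j).star.integrable one_le_two
  have expand : ∀ ω, v ω i * star (v ω j) = (v ω i - c i) * star (v ω j - c j)
      + (c i * star (v ω j) + star (c j) * v ω i - c i * star (c j)) := by
    intro ω; rw [star_sub]; ring
  simp only [crossMoment, vcov, of_apply, Matrix.add_apply, vecMulVec_apply, Pi.star_apply,
    funext expand]
  rw [integral_add hcentered
      (((hj.const_mul _).fun_add (hi.const_mul _)).sub' (integrable_const _)),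
    integral_sub ((hj.const_mul _).fun_add (hi.const_mul _)) (integrable_const _),
    integral_add (hj.const_mul _) (hi.const_mul _), integral_const_mul, integral_const_mul,
    integral_const, show ∫ ω, star (v ω j) ∂μ = star (c j) from integral_conj]
  simp only [probReal_univ, one_smul, c, vmean]
  ring

lemma ProbabilityTheory.IndepFun.crossMoment_eq {u : Ω → Fin p → ℂ} {w : Ω → Fin q → ℂ}
    (h : IndepFun u w μ) (hu : AEMeasurable u μ) (hw : AEMeasurable w μ) :
    crossMoment μ u w = vecMulVec (vmean μ u) (star (vmean μ w)) := by
  ext i j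
  have hij : IndepFun (fun ω => u ω i) (fun ω => star (w ω j)) μ :=
    h.comp (measurable_pi_apply i) (continuous_star.measurable.comp (measurable_pi_apply j))
  rw [crossMoment, of_apply, hij.integral_fun_mul_eq_mul_integral
    (hu.eval i).aestronglyMeasurable (hw.eval j).aestronglyMeasurable.star]
  exact congrArg _ integral_conj

lemma crossMoment_sub_sub {u w : Ω → Fin p → ℂ} (hu : ∀ i, MemLp (fun ω => u ω i) 2 μ)
    (hw : ∀ i, MemLp (fun ω => w ω i) 2 μ) :
    crossMoment μ (fun ω => u ω - w ω) (fun ω => u ω - w ω)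
      = crossMoment μ u u - crossMoment μ u w - crossMoment μ w u + crossMoment μ w w := by
  ext i j
  have expand : ∀ ω, (u ω - w ω) i * star ((u ω - w ω) j) = u ω i * star (u ω j)
      - u ω i * star (w ω j) - w ω i * star (u ω j) + w ω i * star (w ω j) := by
    intro ω; simp only [Pi.sub_apply, star_sub]; ring
  have huu := integrable_mul_star (hu i) (hu j)
  have huw := integrable_mul_star (hu i) (hw j)
  have hwu := integrable_mul_star (hw i) (hu j)
  have hww := integrable_mul_star (hw i) (hw j)
  simp only [crossMoment, of_apply, Matrix.sub_apply, Matrix.add_apply, funext expand]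
  rw [integral_add ((huu.sub' huw).sub' hwu) hww, integral_sub (huu.sub' huw) hwu,
    integral_sub huu huw]

lemma integral_star_dotProduct_mulVec {v : Ω → Fin p → ℂ}
    (hv : ∀ i, MemLp (fun ω => v ω i) 2 μ) (F : Matrix (Fin p) (Fin p) ℂ) :
    ∫ ω, star (v ω) ⬝ᵥ F *ᵥ v ω ∂μ = (F * crossMoment μ v v).trace := by
  have hint : ∀ i j, Integrable (fun ω => star (v ω i) * (F i j * v ω j)) μ := fun i j =>
    (integrable_mul_star (hv j) (hv i)).const_mul (F i j) |>.congr
      (Filter.Eventually.of_forall fun ω => by ring)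
  simp only [dotProduct, mulVec, Pi.star_apply, Finset.mul_sum, trace, diag_apply, mul_apply,
    crossMoment, of_apply]
  rw [integral_finsetSum _ fun i _ => integrable_finsetSum _ fun j _ => hint i j]
  refine Finset.sum_congr rfl fun i _ => ?_
  rw [integral_finsetSum _ fun j _ => hint i j]
  refine Finset.sum_congr rfl fun j _ => ?_
  rw [← integral_const_mul]
  exact integral_congr_ae (Filter.Eventually.of_forall fun ω => by ring)

end Moments

section Algebra

variable {m n : ℕ}

lemma trace_mul_vecMulVec_star (F : Matrix (Fin m) (Fin m) ℂ) (u : Fin m → ℂ) :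
    (F * vecMulVec u (star u)).trace = star u ⬝ᵥ F *ᵥ u := by
  rw [mul_vecMulVec, trace_vecMulVec, dotProduct_comm]

lemma sum_smul_ite_add_vecMulVec (S : Matrix (Fin n) (Fin n) ℂ)
    (C : Fin n → Matrix (Fin m) (Fin m) ℂ) (a : Fin n → Fin m → ℂ) :
    ∑ k, ∑ l, S k l • ((if k = l then C k else 0) + vecMulVec (a k) (star (a l)))
      = ∑ k, S k k • C k + (Matrix.of fun i k => a k i) * S * (Matrix.of fun i k => a k i)ᴴ := by
  simp only [smul_add, Finset.sum_add_distrib, smul_ite, smul_zero, Finset.sum_ite_eq,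
    Finset.mem_univ, if_true]
  congr 1
  ext i j
  simp only [Matrix.sum_apply, Matrix.smul_apply, vecMulVec_apply, mul_apply, of_apply,
    conjTranspose_apply, Pi.star_apply, smul_eq_mul, Finset.sum_mul]
  rw [Finset.sum_comm]
  exact Finset.sum_congr rfl fun l _ => Finset.sum_congr rfl fun k _ => by ring

lemma trace_mul_residual_moment (F Cy : Matrix (Fin m) (Fin m) ℂ) (Cx : Matrix (Fin n) (Fin n) ℂ)
    (Ca : Fin n → Matrix (Fin m) (Fin m) ℂ) (Abar : Matrix (Fin m) (Fin n) ℂ) (ybar : Fin m → ℂ)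
    (xbar : Fin n → ℂ) :
    let S := Cx + vecMulVec xbar (star xbar)
    let B := Matrix.diagonal fun k => (F * Ca k).trace
    let d := ybar - Abar *ᵥ xbar
    (F * (Cy + vecMulVec ybar (star ybar) - vecMulVec ybar (star (Abar *ᵥ xbar))
        - vecMulVec (Abar *ᵥ xbar) (star ybar) + (∑ k, S k k • Ca k + Abar * S * Abarᴴ))).trace
      = star d ⬝ᵥ F *ᵥ d + star xbar ⬝ᵥ B *ᵥ xbar + (F * Cy).trace + (Cx * B).trace
        + (Cx * (Abarᴴ * F * Abar)).trace := by
  intro S B d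
  have hS : Abar * S * Abarᴴ
      = Abar * Cx * Abarᴴ + vecMulVec (Abar *ᵥ xbar) (star (Abar *ᵥ xbar)) := by
    rw [star_mulVec, Matrix.mul_add, Matrix.add_mul, mul_vecMulVec, vecMulVec_mul]
  have hd : vecMulVec ybar (star ybar) - vecMulVec ybar (star (Abar *ᵥ xbar))
      - vecMulVec (Abar *ᵥ xbar) (star ybar) + vecMulVec (Abar *ᵥ xbar) (star (Abar *ᵥ xbar))
      = vecMulVec d (star d) := by
    simp only [d, star_sub, vecMulVec_sub, sub_vecMulVec]
    abel
  have hdiag : (F * ∑ k, S k k • Ca k).trace = star xbar ⬝ᵥ B *ᵥ xbar + (Cx * B).trace := by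
    have hB : (Cx * B).trace = ∑ k, Cx k k * (F * Ca k).trace := by
      simp only [B, trace, diag_apply, mul_diagonal]
    rw [hB, Matrix.mul_sum, trace_sum, dotProduct, ← Finset.sum_add_distrib]
    refine Finset.sum_congr rfl fun k _ => ?_
    simp only [Matrix.mul_smul, trace_smul, B, mulVec_diagonal, Pi.star_apply, S,
      Matrix.add_apply, vecMulVec_apply, smul_eq_mul]
    ring
  have hcyc : (F * (Abar * Cx * Abarᴴ)).trace = (Cx * (Abarᴴ * F * Abar)).trace := by
    rw [show F * (Abar * Cx * Abarᴴ) = F * Abar * (Cx * Abarᴴ) by simp only [Matrix.mul_assoc],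
      trace_mul_comm]
    simp only [Matrix.mul_assoc]
  calc _ = (F * (Cy + vecMulVec d (star d) + ∑ k, S k k • Ca k + Abar * Cx * Abarᴴ)).trace := by
        rw [hS, ← hd]
        congr 2
        abel
    _ = _ := by
        rw [mul_add, mul_add, mul_add, trace_add, trace_add, trace_add, trace_mul_vecMulVec_star,
          hdiag, hcyc]
        ring

end Algebra

section LinearModel

variable {Ω : Type*} [MeasurableSpace Ω] {μ : Measure Ω} {m n : ℕ}
  {y : Ω → Fin m → ℂ} {A : Ω → Matrix (Fin m) (Fin n) ℂ} {x : Ω → Fin n → ℂ}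

lemma aemeasurable_JFam (hy : ∀ i, MemLp (fun ω => y ω i) 2 μ)
    (hA : ∀ i j, MemLp (fun ω => A ω i j) 2 μ) (hx : ∀ j, MemLp (fun ω => x ω j) 2 μ) :
    ∀ i, @AEMeasurable _ _ (JMeas m n i) _ (JFam y A x i) μ
  | .y => aemeasurable_of_forall_memLp hy
  | .x => aemeasurable_of_forall_memLp hx
  | .col j => aemeasurable_of_forall_memLp fun i => hA i j

lemma indepFun_mulVec_of_iIndepFun (hIndep : iIndepFun (m := JMeas m n) (JFam y A x) μ)
    (hmeas : ∀ i, @AEMeasurable _ _ (JMeas m n i) _ (JFam y A x i) μ) :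
    IndepFun y (fun ω => A ω *ᵥ x ω) μ := by
  -- makes `JMeas` visible to instance search on the dependent products below
  let _ := JMeas m n
  let T : Finset (JIdx n) :=
    .cons .x (Finset.univ.map ⟨JIdx.col, fun _ _ h => by cases h; rfl⟩) (by simp)
  have hx : JIdx.x ∈ T := Finset.mem_cons_self _ _
  have hcol : ∀ j, JIdx.col j ∈ T :=
    fun j => Finset.mem_cons_of_mem (Finset.mem_map_of_mem _ (Finset.mem_univ j))
  have hy : JIdx.y ∈ ({JIdx.y} : Finset (JIdx n)) := Finset.mem_singleton_self _
  have hyT : Disjoint {JIdx.y} T := by simp [T]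
  have hφ : Measurable fun g : (∀ i : ({JIdx.y} : Finset (JIdx n)), JType m n i) =>
      (g ⟨.y, hy⟩ : Fin m → ℂ) := measurable_pi_apply _
  have hψ : Measurable fun g : (∀ i : T, JType m n i) =>
      (Matrix.of fun i j => (g ⟨.col j, hcol j⟩ : Fin m → ℂ) i) *ᵥ (g ⟨.x, hx⟩ : Fin n → ℂ) := by
    refine measurable_pi_lambda _ fun i => ?_
    simp only [mulVec, dotProduct, of_apply]
    refine Finset.measurable_sum _ fun j _ => ?_
    apply Measurable.mul <;> exact (measurable_pi_apply _).eval
  exact (hIndep.indepFun_finset₀ {JIdx.y} T hyT hmeas).comp hφ hψ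

lemma indepFun_entry_coord (hIndep : iIndepFun (m := JMeas m n) (JFam y A x) μ)
    (i : Fin m) (k l : Fin n) : IndepFun (fun ω => A ω i k) (fun ω => x ω l) μ :=
  (hIndep.indepFun (i := .col k) (j := .x) nofun).comp (measurable_pi_apply i)
    (measurable_pi_apply l)

lemma memLp_mulVec (hA : ∀ i j, MemLp (fun ω => A ω i j) 2 μ)
    (hx : ∀ j, MemLp (fun ω => x ω j) 2 μ) (hIndep : iIndepFun (m := JMeas m n) (JFam y A x) μ)
    (i : Fin m) : MemLp (fun ω => (A ω *ᵥ x ω) i) 2 μ := by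
  simp only [mulVec, dotProduct]
  exact memLp_finsetSum _ fun k _ =>
    (indepFun_entry_coord hIndep i k k).memLp_two_mul (hA i k) (hx k)

lemma vmean_mulVec [IsFiniteMeasure μ] (hA : ∀ i j, MemLp (fun ω => A ω i j) 2 μ)
    (hx : ∀ j, MemLp (fun ω => x ω j) 2 μ) (hIndep : iIndepFun (m := JMeas m n) (JFam y A x) μ) :
    vmean μ (fun ω => A ω *ᵥ x ω) = (Matrix.of fun i j => ∫ ω, A ω i j ∂μ) *ᵥ vmean μ x := by
  ext i
  simp only [vmean, mulVec, dotProduct, of_apply]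
  rw [integral_finsetSum _ fun k _ =>
    ((indepFun_entry_coord hIndep i k k).memLp_two_mul (hA i k) (hx k)).integrable one_le_two]
  exact Finset.sum_congr rfl fun k _ =>
    (indepFun_entry_coord hIndep i k k).integral_fun_mul_eq_mul_integral
      (hA i k).aestronglyMeasurable (hx k).aestronglyMeasurable

lemma crossMoment_col_col [IsProbabilityMeasure μ] (hA : ∀ i j, MemLp (fun ω => A ω i j) 2 μ)
    (hIndep : iIndepFun (m := JMeas m n) (JFam y A x) μ) (k l : Fin n) :
    crossMoment μ (fun ω i => A ω i k) (fun ω i => A ω i l)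
      = (if k = l then vcov μ (fun ω i => A ω i k) else 0)
        + vecMulVec (vmean μ fun ω i => A ω i k) (star (vmean μ fun ω i => A ω i l)) := by
  by_cases hkl : k = l
  · subst hkl
    rw [if_pos rfl, crossMoment_self fun i => hA i k]
  · rw [if_neg hkl, zero_add]
    exact (hIndep.indepFun (i := .col k) (j := .col l) (by simpa using hkl)).crossMoment_eq
      (aemeasurable_of_forall_memLp fun i => hA i k) (aemeasurable_of_forall_memLp fun i => hA i l)

lemma crossMoment_mulVec_self_eq_sum (hA : ∀ i j, MemLp (fun ω => A ω i j) 2 μ)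
    (hx : ∀ j, MemLp (fun ω => x ω j) 2 μ) (hIndep : iIndepFun (m := JMeas m n) (JFam y A x) μ)
    (hmeas : ∀ i, @AEMeasurable _ _ (JMeas m n i) _ (JFam y A x i) μ) :
    crossMoment μ (fun ω => A ω *ᵥ x ω) (fun ω => A ω *ᵥ x ω)
      = ∑ k, ∑ l, crossMoment μ x x k l •
          crossMoment μ (fun ω i => A ω i k) (fun ω i => A ω i l) := by
  ext i j
  have hind : ∀ k l, IndepFun (fun ω => A ω i k * star (A ω j l))
      (fun ω => x ω k * star (x ω l)) μ := fun k l =>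
    (hIndep.indepFun_prodMk₀ hmeas (.col k) (.col l) .x nofun nofun).comp
      (φ := fun p : (Fin m → ℂ) × (Fin m → ℂ) => p.1 i * star (p.2 j))
      (ψ := fun v : Fin n → ℂ => v k * star (v l)) (by fun_prop) (by fun_prop)
  have hint : ∀ k l, Integrable
      (fun ω => A ω i k * star (A ω j l) * (x ω k * star (x ω l))) μ := fun k l =>
    (hind k l).integrable_mul (integrable_mul_star (hA i k) (hA j l))
      (integrable_mul_star (hx k) (hx l))
  have expand : ∀ ω, (A ω *ᵥ x ω) i * star ((A ω *ᵥ x ω) j)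
      = ∑ k, ∑ l, A ω i k * star (A ω j l) * (x ω k * star (x ω l)) := by
    intro ω
    simp only [mulVec, dotProduct, star_sum, star_mul', Finset.sum_mul_sum]
    exact Finset.sum_congr rfl fun k _ => Finset.sum_congr rfl fun l _ => by ring
  simp only [crossMoment, of_apply, funext expand, Matrix.sum_apply, Matrix.smul_apply,
    smul_eq_mul]
  rw [integral_finsetSum _ fun k _ => integrable_finsetSum _ fun l _ => hint k l]
  refine Finset.sum_congr rfl fun k _ => ?_
  rw [integral_finsetSum _ fun l _ => hint k l]
  refine Finset.sum_congr rfl fun l _ => ?_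
  rw [(hind k l).integral_fun_mul_eq_mul_integral (integrable_mul_star (hA i k) (hA j l)).1
    (integrable_mul_star (hx k) (hx l)).1, mul_comm]

lemma crossMoment_mulVec_self [IsProbabilityMeasure μ] (hA : ∀ i j, MemLp (fun ω => A ω i j) 2 μ)
    (hx : ∀ j, MemLp (fun ω => x ω j) 2 μ) (hIndep : iIndepFun (m := JMeas m n) (JFam y A x) μ)
    (hmeas : ∀ i, @AEMeasurable _ _ (JMeas m n i) _ (JFam y A x i) μ) :
    let Abar : Matrix (Fin m) (Fin n) ℂ := Matrix.of fun i j => ∫ ω, A ω i j ∂μ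
    crossMoment μ (fun ω => A ω *ᵥ x ω) (fun ω => A ω *ᵥ x ω)
      = ∑ k, crossMoment μ x x k k • vcov μ (fun ω i => A ω i k)
        + Abar * crossMoment μ x x * Abarᴴ := by
  rw [crossMoment_mulVec_self_eq_sum hA hx hIndep hmeas]
  simp only [crossMoment_col_col hA hIndep]
  exact sum_smul_ite_add_vecMulVec _ _ fun k => vmean μ fun ω i => A ω i k

end LinearModel

theorem stmt0_general {Ω : Type*} [MeasurableSpace Ω] (μ : Measure Ω) [IsProbabilityMeasure μ]
    {m n : ℕ} (y : Ω → Fin m → ℂ) (A : Ω → Matrix (Fin m) (Fin n) ℂ) (x : Ω → Fin n → ℂ)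
    (hy : ∀ i, MemLp (fun ω => y ω i) 2 μ)
    (hA : ∀ i j, MemLp (fun ω => A ω i j) 2 μ)
    (hx : ∀ j, MemLp (fun ω => x ω j) 2 μ)
    (hIndep : iIndepFun (m := JMeas m n) (JFam y A x) μ)
    (F : Matrix (Fin m) (Fin m) ℂ) :
    ∫ ω, star (y ω - (A ω).mulVec (x ω)) ⬝ᵥ F.mulVec (y ω - (A ω).mulVec (x ω)) ∂μ =
      (let Abar : Matrix (Fin m) (Fin n) ℂ := Matrix.of fun i j => ∫ ω, A ω i j ∂μ
       let B : Matrix (Fin n) (Fin n) ℂ :=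
         Matrix.diagonal fun j => (F * vcov μ fun ω k => A ω k j).trace
       let d : Fin m → ℂ := vmean μ y - Abar.mulVec (vmean μ x)
       star d ⬝ᵥ F.mulVec d + star (vmean μ x) ⬝ᵥ B.mulVec (vmean μ x)
         + (F * vcov μ y).trace + (vcov μ x * B).trace
         + (vcov μ x * (Abar.conjTranspose * F * Abar)).trace) := by
  have hmeas := aemeasurable_JFam hy hA hx
  have hz := memLp_mulVec hA hx hIndep
  have hyz := indepFun_mulVec_of_iIndepFun hIndep hmeas
  rw [integral_star_dotProduct_mulVec (v := fun ω => y ω - A ω *ᵥ x ω)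
      (fun i => (hy i).sub (hz i)) F,
    crossMoment_sub_sub hy hz,
    hyz.crossMoment_eq (aemeasurable_of_forall_memLp hy) (aemeasurable_of_forall_memLp hz),
    hyz.symm.crossMoment_eq (aemeasurable_of_forall_memLp hz) (aemeasurable_of_forall_memLp hy),
    crossMoment_mulVec_self hA hx hIndep hmeas, crossMoment_self hy, crossMoment_self hx,
    vmean_mulVec hA hx hIndep]
  exact trace_mul_residual_moment _ _ _ _ _ _ _

/-- **Lemma 1 of the paper.** If `y`, `A`, `x` are mutually independent with
finite second moments, the columns of `A` are mutually independent, and `F` is a deterministic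
Hermitian matrix, then
`E[(y−Ax)ᴴ F (y−Ax)] = (⟨y⟩−⟨A⟩⟨x⟩)ᴴ F (⟨y⟩−⟨A⟩⟨x⟩) + ⟨x⟩ᴴ B ⟨x⟩ + Tr(F Σ_y) + Tr(Σ_x B)
  + Tr(Σ_x ⟨A⟩ᴴ F ⟨A⟩)` with `B = diag(Tr(F Σ_{a_1}), …, Tr(F Σ_{a_n}))`. -/
theorem stmt0 {Ω : Type*} [MeasurableSpace Ω] (μ : Measure Ω) [IsProbabilityMeasure μ]
    {m n : ℕ} (y : Ω → Fin m → ℂ) (A : Ω → Matrix (Fin m) (Fin n) ℂ) (x : Ω → Fin n → ℂ)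
    (hy : ∀ i, MemLp (fun ω => y ω i) 2 μ)
    (hA : ∀ i j, MemLp (fun ω => A ω i j) 2 μ)
    (hx : ∀ j, MemLp (fun ω => x ω j) 2 μ)
    (hIndep : iIndepFun (m := JMeas m n) (JFam y A x) μ)
    (F : Matrix (Fin m) (Fin m) ℂ) (hF : F.IsHermitian) :
    ∫ ω, star (y ω - (A ω).mulVec (x ω)) ⬝ᵥ F.mulVec (y ω - (A ω).mulVec (x ω)) ∂μ =
      (let Abar : Matrix (Fin m) (Fin n) ℂ := Matrix.of fun i j => ∫ ω, A ω i j ∂μ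
       let B : Matrix (Fin n) (Fin n) ℂ :=
         Matrix.diagonal fun j => (F * vcov μ fun ω k => A ω k j).trace
       let d : Fin m → ℂ := vmean μ y - Abar.mulVec (vmean μ x)
       star d ⬝ᵥ F.mulVec d + star (vmean μ x) ⬝ᵥ B.mulVec (vmean μ x)
         + (F * vcov μ y).trace + (vcov μ x * B).trace
         + (vcov μ x * (Abar.conjTranspose * F * Abar)).trace) :=
  stmt0_general μ y A x hy hA hx hIndep F
end

section
/- Let X and E be independent real Gaussian random variables with X ~ N(m, s²), s > 0, and E ~ N(0, n²), n ≥ 0, and let Y = X + E. Let l < u be real numbers, set η₁ = (l−m)/√(s²+n²), η₂ = (u−m)/√(s²+n²), and Z = Φ(η₂) − Φ(η₁). Then P(Y ∈ (l, u]) = Z > 0 and the conditional expectation of X given the event {Y ∈ (l, u]} equals m + (s²/√(s²+n²)) · (φ(η₁) − φ(η₂))/Z. -/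
open MeasureTheory ProbabilityTheory

noncomputable def stdNormalPDF (x : ℝ) : ℝ :=
  (Real.sqrt (2 * Real.pi))⁻¹ * Real.exp (-x ^ 2 / 2)

noncomputable def stdNormalCDF (x : ℝ) : ℝ :=
  ∫ t in Set.Iic x, stdNormalPDF t

/-!
`Y = X + E` is `N(m, s² + n²)`, so `P(Y ∈ (l, u])` is a difference of values of `Φ`. For the
numerator write `(s² + n²) X = (n² X - s² E) + s² Y`: the pair `(n² X - s² E, Y)` is Gaussian with
zero covariance, so `n² X - s² E` is independent of `Y` and contributes `P(A) · n² m`. What is left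
is the truncated mean of a Gaussian, computed after standardising by means of `φ' = -t φ`.
-/

open Set
open scoped NNReal ENNReal

lemma stdNormalPDF_eq_gaussianPDFReal : stdNormalPDF = gaussianPDFReal 0 1 := by
  ext x
  simp [stdNormalPDF, gaussianPDFReal]

lemma hasDerivAt_stdNormalPDF (x : ℝ) : HasDerivAt stdNormalPDF (-x * stdNormalPDF x) x := by
  have hexp : HasDerivAt (fun y : ℝ ↦ -y ^ 2 / 2) (-x) x := by
    refine ((hasDerivAt_pow 2 x).fun_neg.div_const 2).congr_deriv ?_
    ring
  refine ((hexp.exp).const_mul (Real.sqrt (2 * Real.pi))⁻¹).congr_deriv ?_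
  simp only [stdNormalPDF]; ring

lemma setIntegral_Ioc_stdNormalPDF {a b : ℝ} (hab : a ≤ b) :
    ∫ t in Ioc a b, stdNormalPDF t = stdNormalCDF b - stdNormalCDF a := by
  rw [stdNormalCDF, stdNormalCDF, stdNormalPDF_eq_gaussianPDFReal,
    intervalIntegral.integral_Iic_sub_Iic ((integrable_gaussianPDFReal 0 1).integrableOn)
      ((integrable_gaussianPDFReal 0 1).integrableOn), intervalIntegral.integral_of_le hab]

lemma setIntegral_Ioc_mul_stdNormalPDF {a b : ℝ} (hab : a ≤ b) :
    ∫ t in Ioc a b, t * stdNormalPDF t = stdNormalPDF a - stdNormalPDF b := by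
  have hderiv (t : ℝ) : HasDerivAt (fun t ↦ -stdNormalPDF t) (t * stdNormalPDF t) t := by
    simpa using (hasDerivAt_stdNormalPDF t).fun_neg
  have hcont : Continuous fun t ↦ t * stdNormalPDF t := by unfold stdNormalPDF; fun_prop
  rw [← intervalIntegral.integral_of_le hab,
    intervalIntegral.integral_eq_sub_of_hasDerivAt (fun t _ ↦ hderiv t)
      (hcont.intervalIntegrable a b)]
  ring

lemma stdNormalCDF_strictMono : StrictMono stdNormalCDF := by
  intro a b hab
  rw [← sub_pos, ← setIntegral_Ioc_stdNormalPDF hab.le,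
    ← intervalIntegral.integral_of_le hab.le]
  refine intervalIntegral.intervalIntegral_pos_of_pos_on ?_ (fun x _ ↦ ?_) hab
  · rw [stdNormalPDF_eq_gaussianPDFReal]
    exact (integrable_gaussianPDFReal 0 1).intervalIntegrable
  · rw [stdNormalPDF_eq_gaussianPDFReal]
    exact gaussianPDFReal_pos 0 1 x one_ne_zero

lemma measureReal_gaussianReal_zero_one_Ioc {a b : ℝ} (hab : a ≤ b) :
    (gaussianReal 0 1).real (Ioc a b) = stdNormalCDF b - stdNormalCDF a := by
  rw [measureReal_def, gaussianReal_apply_eq_integral 0 one_ne_zero,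
    ← stdNormalPDF_eq_gaussianPDFReal, setIntegral_Ioc_stdNormalPDF hab, ENNReal.toReal_ofReal]
  exact sub_nonneg.2 (stdNormalCDF_strictMono.monotone hab)

lemma setIntegral_Ioc_gaussianReal_zero_one {a b : ℝ} (hab : a ≤ b) :
    ∫ t in Ioc a b, t ∂gaussianReal 0 1 = stdNormalPDF a - stdNormalPDF b := by
  rw [← setIntegral_Ioc_mul_stdNormalPDF hab, ← integral_indicator measurableSet_Ioc,
    ← integral_indicator measurableSet_Ioc, integral_gaussianReal_eq_integral_smul one_ne_zero,
    ← stdNormalPDF_eq_gaussianPDFReal]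
  congr 1 with t
  by_cases ht : t ∈ Ioc a b <;> simp [ht, mul_comm]

lemma gaussianReal_eq_map_gaussianReal_zero_one (m : ℝ) (v : ℝ≥0) :
    gaussianReal m v = (gaussianReal 0 1).map (fun t ↦ m + Real.sqrt v * t) := by
  have hcomp : (fun t ↦ m + Real.sqrt v * t) = (m + ·) ∘ (Real.sqrt v * ·) := rfl
  rw [hcomp, ← Measure.map_map (by fun_prop) (by fun_prop), gaussianReal_map_const_mul,
    gaussianReal_map_const_add]
  congr 1
  · ring
  · ext; simp

lemma preimage_affine_Ioc {m σ : ℝ} (hσ : 0 < σ) (l u : ℝ) :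
    (fun t ↦ m + σ * t) ⁻¹' Ioc l u = Ioc ((l - m) / σ) ((u - m) / σ) := by
  rw [show (fun t ↦ m + σ * t) = (m + ·) ∘ (σ * ·) from rfl, preimage_comp,
    preimage_const_add_Ioc, preimage_const_mul_Ioc₀ _ _ hσ]

section GaussianReal

variable {m : ℝ} {v : ℝ≥0} {l u : ℝ}

lemma gaussianReal_Ioc (hv : v ≠ 0) (hlu : l ≤ u) :
    gaussianReal m v (Ioc l u) = ENNReal.ofReal
      (stdNormalCDF ((u - m) / Real.sqrt v) - stdNormalCDF ((l - m) / Real.sqrt v)) := by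
  have hσ : 0 < Real.sqrt v := Real.sqrt_pos.2 (by positivity)
  rw [gaussianReal_eq_map_gaussianReal_zero_one,
    Measure.map_apply (by fun_prop) measurableSet_Ioc, preimage_affine_Ioc hσ,
    ← measureReal_gaussianReal_zero_one_Ioc, ofReal_measureReal]
  gcongr

lemma setIntegral_Ioc_gaussianReal (hv : v ≠ 0) (hlu : l ≤ u) :
    ∫ y in Ioc l u, y ∂gaussianReal m v =
      m * (stdNormalCDF ((u - m) / Real.sqrt v) - stdNormalCDF ((l - m) / Real.sqrt v)) +
        Real.sqrt v * (stdNormalPDF ((l - m) / Real.sqrt v) -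
          stdNormalPDF ((u - m) / Real.sqrt v)) := by
  have hσ : 0 < Real.sqrt v := Real.sqrt_pos.2 (by positivity)
  have hη : (l - m) / Real.sqrt v ≤ (u - m) / Real.sqrt v := by gcongr
  have hid : Integrable (fun t : ℝ ↦ t) (gaussianReal 0 1) :=
    (memLp_id_gaussianReal 1).integrable le_rfl
  rw [gaussianReal_eq_map_gaussianReal_zero_one,
    setIntegral_map measurableSet_Ioc (by fun_prop) (by fun_prop), preimage_affine_Ioc hσ,
    integral_add (integrable_const m) (hid.const_mul _).integrableOn, setIntegral_const,
    integral_const_mul, measureReal_gaussianReal_zero_one_Ioc hη,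
    setIntegral_Ioc_gaussianReal_zero_one hη, smul_eq_mul, mul_comm]

end GaussianReal

section Regression

variable {Ω : Type*} [MeasurableSpace Ω] {P : Measure Ω} {X E : Ω → ℝ} {m₁ m₂ : ℝ}
  {v₁ v₂ : ℝ≥0}

lemma setIntegral_preimage_eq_mul_of_indepFun {𝓨 : Type*} [MeasurableSpace 𝓨] {W : Ω → ℝ}
    {Y : Ω → 𝓨} (h : W ⟂ᵢ[P] Y) (hW : AEMeasurable W P) (hY : Measurable Y) {B : Set 𝓨}
    (hB : MeasurableSet B) :
    ∫ ω in Y ⁻¹' B, W ω ∂P = P.real (Y ⁻¹' B) * ∫ ω, W ω ∂P :=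
  Indep.setIntegral_eq_mul (f := id) hY.comap_le h.symm hW ⟨B, hB, rfl⟩ aestronglyMeasurable_id

lemma indepFun_sub_add_of_gaussianReal (hX : HasLaw X (gaussianReal m₁ v₁) P)
    (hE : HasLaw E (gaussianReal m₂ v₂) P) (hXE : X ⟂ᵢ[P] E) :
    (fun ω ↦ v₂ * X ω - v₁ * E ω) ⟂ᵢ[P] (fun ω ↦ X ω + E ω) := by
  have := hX.isProbabilityMeasure
  have hGX := hX.hasGaussianLaw
  have hGE := hE.hasGaussianLaw
  have hX2 := hGX.memLp_two
  have hE2 := hGE.memLp_two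
  let L : ℝ × ℝ →L[ℝ] ℝ × ℝ :=
    ((v₂ : ℝ) • ContinuousLinearMap.fst ℝ ℝ ℝ - (v₁ : ℝ) • ContinuousLinearMap.snd ℝ ℝ ℝ).prod
      (ContinuousLinearMap.fst ℝ ℝ ℝ + ContinuousLinearMap.snd ℝ ℝ ℝ)
  have hG : HasGaussianLaw (fun ω ↦ (v₂ * X ω - v₁ * E ω, X ω + E ω)) P :=
    (hXE.hasGaussianLaw hGX hGE).map_fun L
  refine hG.indepFun_of_covariance_eq_zero ?_
  change cov[fun ω ↦ v₂ * X ω - v₁ * E ω, X + E; P] = 0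
  rw [covariance_fun_sub_left (hX2.const_mul _) (hE2.const_mul _) (hX2.add hE2),
    covariance_const_mul_left, covariance_const_mul_left, covariance_add_right hX2 hX2 hE2,
    covariance_add_right hE2 hX2 hE2, covariance_self hX.aemeasurable,
    covariance_self hE.aemeasurable, hXE.covariance_eq_zero hX2 hE2,
    hXE.symm.covariance_eq_zero hE2 hX2, hX.variance_eq, hE.variance_eq,
    variance_id_gaussianReal, variance_id_gaussianReal]
  ring

lemma mul_setIntegral_preimage_add_of_gaussianReal (hXm : Measurable X) (hEm : Measurable E)
    (hX : HasLaw X (gaussianReal m₁ v₁) P) (hE : HasLaw E (gaussianReal m₂ v₂) P)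
    (hXE : X ⟂ᵢ[P] E) {B : Set ℝ} (hB : MeasurableSet B) :
    (v₁ + v₂) * ∫ ω in (fun ω ↦ X ω + E ω) ⁻¹' B, X ω ∂P =
      P.real ((fun ω ↦ X ω + E ω) ⁻¹' B) * (v₂ * m₁ - v₁ * m₂) +
        v₁ * ∫ ω in (fun ω ↦ X ω + E ω) ⁻¹' B, (X ω + E ω) ∂P := by
  have := hX.isProbabilityMeasure
  have hXi := hX.hasGaussianLaw.integrable
  have hEi := hE.hasGaussianLaw.integrable
  have hWi : Integrable (fun ω ↦ v₂ * X ω - v₁ * E ω) P :=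
    (hXi.const_mul _).sub (hEi.const_mul _)
  have hYi : Integrable (fun ω ↦ X ω + E ω) P := hXi.add hEi
  have hsplit (ω : Ω) : (v₁ + v₂) * X ω = (v₂ * X ω - v₁ * E ω) + v₁ * (X ω + E ω) := by ring
  have hW : ∫ ω, (v₂ * X ω - v₁ * E ω) ∂P = v₂ * m₁ - v₁ * m₂ := by
    rw [integral_sub (hXi.const_mul _) (hEi.const_mul _), integral_const_mul, integral_const_mul,
      hX.integral_eq, hE.integral_eq, integral_id_gaussianReal, integral_id_gaussianReal]
  rw [← integral_const_mul]
  simp_rw [hsplit]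
  rw [integral_add hWi.integrableOn (hYi.const_mul _).integrableOn, integral_const_mul,
    setIntegral_preimage_eq_mul_of_indepFun (indepFun_sub_add_of_gaussianReal hX hE hXE)
      hWi.aemeasurable (hXm.add hEm) hB, hW]

end Regression

theorem stmt13_general {Ω : Type*} [MeasurableSpace Ω] (P : Measure Ω)
    (X E : Ω → ℝ) (hX : Measurable X) (hE : Measurable E)
    (m s n : ℝ) (hs : 0 < s)
    (hXd : P.map X = gaussianReal m (s ^ 2).toNNReal)
    (hEd : P.map E = gaussianReal 0 (n ^ 2).toNNReal)
    (hInd : IndepFun X E P)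
    (l u : ℝ) (hlu : l < u) :
    let Y : Ω → ℝ := fun ω => X ω + E ω
    let η₁ : ℝ := (l - m) / Real.sqrt (s ^ 2 + n ^ 2)
    let η₂ : ℝ := (u - m) / Real.sqrt (s ^ 2 + n ^ 2)
    let Z : ℝ := stdNormalCDF η₂ - stdNormalCDF η₁
    let A : Set Ω := {ω | Y ω ∈ Set.Ioc l u}
    P A = ENNReal.ofReal Z ∧ 0 < Z ∧
      (∫ ω in A, X ω ∂P) / (P A).toReal =
        m + (s ^ 2 / Real.sqrt (s ^ 2 + n ^ 2)) * (stdNormalPDF η₁ - stdNormalPDF η₂) / Z := by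
  intro Y η₁ η₂ Z A
  have hv : (((s ^ 2).toNNReal + (n ^ 2).toNNReal : ℝ≥0) : ℝ) = s ^ 2 + n ^ 2 := by
    simp [sq_nonneg]
  have hv₀ : (s ^ 2).toNNReal + (n ^ 2).toNNReal ≠ 0 := by
    rw [← NNReal.coe_ne_zero, hv]
    positivity
  have hσ : 0 < Real.sqrt (s ^ 2 + n ^ 2) := by positivity
  have hY : Measurable Y := hX.add hE
  have hYd : P.map Y = gaussianReal m ((s ^ 2).toNNReal + (n ^ 2).toNNReal) := by
    rw [← add_zero m]
    exact gaussianReal_add_gaussianReal_of_indepFun hInd hXd hEd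
  have hPA : P A = ENNReal.ofReal Z := by
    rw [show A = Y ⁻¹' Ioc l u from rfl, ← Measure.map_apply hY measurableSet_Ioc, hYd,
      gaussianReal_Ioc hv₀ hlu.le, hv]
  have hZ : 0 < Z :=
    sub_pos.2 (stdNormalCDF_strictMono (div_lt_div_of_pos_right (by linarith) hσ))
  have hYA : ∫ ω in A, Y ω ∂P =
      m * Z + Real.sqrt (s ^ 2 + n ^ 2) * (stdNormalPDF η₁ - stdNormalPDF η₂) := by
    rw [show A = Y ⁻¹' Ioc l u from rfl, ← setIntegral_map (f := fun y ↦ y) measurableSet_Ioc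
      aestronglyMeasurable_id hY.aemeasurable, hYd, setIntegral_Ioc_gaussianReal hv₀ hlu.le, hv]
  have hXA := mul_setIntegral_preimage_add_of_gaussianReal hX hE ⟨hX.aemeasurable, hXd⟩
    ⟨hE.aemeasurable, hEd⟩ hInd (measurableSet_Ioc (a := l) (b := u))
  simp only [Real.coe_toNNReal _ (sq_nonneg _), mul_zero, sub_zero, measureReal_def] at hXA
  change _ * ∫ ω in A, X ω ∂P = (P A).toReal * _ + _ * ∫ ω in A, Y ω ∂P at hXA
  rw [hPA, ENNReal.toReal_ofReal hZ.le, hYA] at hXA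
  refine ⟨hPA, hZ, ?_⟩
  rw [hPA, ENNReal.toReal_ofReal hZ.le]
  have hσ2 : Real.sqrt (s ^ 2 + n ^ 2) ^ 2 = s ^ 2 + n ^ 2 := Real.sq_sqrt (by positivity)
  clear_value Y η₁ η₂ Z A
  rw [div_eq_iff hZ.ne', add_mul, div_mul_cancel₀ _ hZ.ne']
  field_simp
  apply mul_left_cancel₀ hσ.ne'
  linear_combination hXA + ((∫ ω in A, X ω ∂P) - m * Z) * hσ2

/-- Let `X ~ N(m, s²)` (`s > 0`) and `E ~ N(0, n²)` (`n ≥ 0`) be independent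
and `Y = X + E`.  For `l < u`, with `η₁ = (l−m)/√(s²+n²)`, `η₂ = (u−m)/√(s²+n²)` and
`Z = Φ(η₂) − Φ(η₁)`, one has `P(Y ∈ (l, u]) = Z > 0` and
`E[X | Y ∈ (l, u]] = m + (s²/√(s²+n²)) (φ(η₁) − φ(η₂))/Z`. -/
theorem stmt13 {Ω : Type*} [MeasurableSpace Ω] (P : Measure Ω) [IsProbabilityMeasure P]
    (X E : Ω → ℝ) (hX : Measurable X) (hE : Measurable E)
    (m s n : ℝ) (hs : 0 < s) (hn : 0 ≤ n)
    (hXd : P.map X = gaussianReal m (s ^ 2).toNNReal)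
    (hEd : P.map E = gaussianReal 0 (n ^ 2).toNNReal)
    (hInd : IndepFun X E P)
    (l u : ℝ) (hlu : l < u) :
    let Y : Ω → ℝ := fun ω => X ω + E ω
    let η₁ : ℝ := (l - m) / Real.sqrt (s ^ 2 + n ^ 2)
    let η₂ : ℝ := (u - m) / Real.sqrt (s ^ 2 + n ^ 2)
    let Z : ℝ := stdNormalCDF η₂ - stdNormalCDF η₁
    let A : Set Ω := {ω | Y ω ∈ Set.Ioc l u}
    P A = ENNReal.ofReal Z ∧ 0 < Z ∧
      (∫ ω in A, X ω ∂P) / (P A).toReal =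
        m + (s ^ 2 / Real.sqrt (s ^ 2 + n ^ 2)) * (stdNormalPDF η₁ - stdNormalPDF η₂) / Z :=
  stmt13_general P X E hX hE m s n hs hXd hEd hInd l u hlu
end
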